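/- arXiv:2605.25180 — 2 statements merged into one kernel-verified Lean document; each statement's English description precedes it below -/
import Mathlib

section
/- Normalization and well-formedness of date-period addition: for every valid date D and every period P = (ny, nm, nd) ∈ ℤ³, the small-step rules for date-period addition terminate when started from D +P P; that is, there exists a unique valid date D' such that D +P P reduces in finitely many steps to D'. -/
/-- A date is a triple of integers (year, month, day). -/
structure Date where
  y : ℤ
  m : ℤ
  d : ℤ

/-- A year is a leap year iff divisible by 4 and (not by 100, or by 400). -/
def isLeap (y : ℤ) : Prop :=
  y % 4 = 0 ∧ (y % 100 ≠ 0 ∨ y % 400 = 0)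

/-- Number of days in month `m` of year `y`. -/
def nbdays (y m : ℤ) : ℤ :=
  if m = 4 ∨ m = 6 ∨ m = 9 ∨ m = 11 then 30
  else if m = 2 then
    (if y % 4 = 0 ∧ (y % 100 ≠ 0 ∨ y % 400 = 0) then 29 else 28)
  else 31

/-- A date is valid iff `1 ≤ m ≤ 12` and `1 ≤ d ≤ nbdays y m`. -/
def Date.valid (D : Date) : Prop :=
  1 ≤ D.m ∧ D.m ≤ 12 ∧ 1 ≤ D.d ∧ D.d ≤ nbdays D.y D.m

/-- Month addition `(y, m, d) +m n`, with round-down of the day component. -/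
def addMonths (D : Date) (n : ℤ) : Date :=
  ⟨D.y + (D.m - 1 + n) / 12,
   1 + (D.m - 1 + n) % 12,
   min D.d (nbdays (D.y + (D.m - 1 + n) / 12) (1 + (D.m - 1 + n) % 12))⟩

/-- A configuration of the small-step day-addition machine:
either a pending addition `D +D n`, or a finished date. -/
inductive Conf where
  | pending (D : Date) (n : ℤ)
  | done (D : Date)

/-- Small-step rules for day addition `+D`. -/
inductive Step : Conf → Conf → Prop where
  | add_days {y m d n : ℤ}
      (h1 : 1 ≤ d + n) (h2 : d + n ≤ nbdays y m) :
      Step (Conf.pending ⟨y, m, d⟩ n) (Conf.done ⟨y, m, d + n⟩)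
  | add_days_over {y m d n : ℤ}
      (h : d + n > nbdays y m) :
      Step (Conf.pending ⟨y, m, d⟩ n)
        (Conf.pending (addMonths ⟨y, m, 1⟩ 1) (n - (nbdays y m - d) - 1))
  | add_days_under1 {y m d n : ℤ}
      (h1 : 1 < d) (h2 : d + n ≤ 0) :
      Step (Conf.pending ⟨y, m, d⟩ n) (Conf.pending ⟨y, m, 1⟩ (d - 1 + n))
  | add_days_under2 {y m n y' m' : ℤ}
      (h1 : 1 + n ≤ 0) (h2 : addMonths ⟨y, m, 1⟩ (-1) = ⟨y', m', 1⟩) :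
      Step (Conf.pending ⟨y, m, 1⟩ n) (Conf.pending ⟨y', m', 1⟩ (n + nbdays y' m'))

/-- Reduction in finitely many steps. -/
def Reduces : Conf → Conf → Prop := Relation.ReflTransGen Step

instance : Nonempty Date := ⟨⟨2000, 3, 1⟩⟩

/-- `addDays D n` is the unique valid normal form of `D +D n`
(when it exists; arbitrary otherwise). -/
noncomputable def addDays (D : Date) (n : ℤ) : Date :=
  Classical.epsilon fun D' : Date =>
    D'.valid ∧ Reduces (Conf.pending D n) (Conf.done D')

/-- Date-period addition `D +P (ny, nm, nd) = (D +m (12·ny + nm)) +D nd`. -/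
noncomputable def addPeriod (D : Date) (P : ℤ × ℤ × ℤ) : Date :=
  addDays (addMonths D (12 * P.1 + P.2.1)) P.2.2

/-- Lexicographic order on dates. -/
def Date.le (a b : Date) : Prop :=
  a.y < b.y ∨ (a.y = b.y ∧ a.m < b.m) ∨ (a.y = b.y ∧ a.m = b.m ∧ a.d ≤ b.d)

/-- Strict lexicographic order on dates. -/
def Date.lt (a b : Date) : Prop :=
  a.y < b.y ∨ (a.y = b.y ∧ a.m < b.m) ∨ (a.y = b.y ∧ a.m = b.m ∧ a.d < b.d)

/-- The epoch date: March 1, 2000. -/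
def epoch : Date := ⟨2000, 3, 1⟩

/-- `toDelta D` is the unique integer `n` with `epoch +D n = D`
(when it exists; arbitrary otherwise). -/
noncomputable def toDelta (D : Date) : ℤ :=
  Classical.epsilon fun n : ℤ => addDays epoch n = D

/-!
From a valid date, each rule either finishes on a valid date or moves to another valid
configuration: month addition from the first of a month lands on the first of a month, and
every month has between 28 and 31 days. The remaining offset shrinks in absolute value,
except when a backward month step overshoots to a small nonnegative offset; `dayBudget`
accounts for this, so it decreases along every step and the rules terminate.
They are deterministic and final configurations are stuck, so the normal form is unique.
-/

lemma twentyEight_le_nbdays (y m : ℤ) : 28 ≤ nbdays y m := by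
  unfold nbdays; split_ifs <;> norm_num

lemma nbdays_le_thirtyOne (y m : ℤ) : nbdays y m ≤ 31 := by
  unfold nbdays; split_ifs <;> norm_num

lemma addMonths_valid {D : Date} (hD : 1 ≤ D.d) (n : ℤ) : (addMonths D n).valid := by
  have := twentyEight_le_nbdays (D.y + (D.m - 1 + n) / 12) (1 + (D.m - 1 + n) % 12)
  refine ⟨?_, ?_, le_min hD (by omega), min_le_right _ _⟩ <;> simp only [addMonths] <;> omega

lemma addMonths_first_of_month (y m n : ℤ) :
    addMonths ⟨y, m, 1⟩ n = ⟨y + (m - 1 + n) / 12, 1 + (m - 1 + n) % 12, 1⟩ := by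
  have := twentyEight_le_nbdays (y + (m - 1 + n) / 12) (1 + (m - 1 + n) % 12)
  simp only [addMonths, Date.mk.injEq, true_and]
  omega

lemma Date.valid_first_of_month {D : Date} (hD : D.valid) : (⟨D.y, D.m, 1⟩ : Date).valid :=
  ⟨hD.1, hD.2.1, le_rfl, by linarith [twentyEight_le_nbdays D.y D.m]⟩

lemma Step.rightUnique : Relator.RightUnique Step := by
  rintro (⟨⟨y, m, d⟩, n⟩ | D) a b ha hb
  · have := twentyEight_le_nbdays y m
    cases ha <;> cases hb <;> first | rfl | omega | grind
  · nomatch ha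

lemma Reduces.done_unique {c : Conf} {D₁ D₂ : Date}
    (h₁ : Reduces c (Conf.done D₁)) (h₂ : Reduces c (Conf.done D₂)) : D₁ = D₂ := by
  have done_stuck : ∀ {D : Date} {c : Conf}, ¬Step (Conf.done D) c := fun h => nomatch h
  rcases h₁.total_of_right_unique Step.rightUnique h₂ with h | h <;>
    rcases h.cases_head with h | ⟨_, hs, _⟩
  · exact Conf.done.inj h
  · exact absurd hs done_stuck
  · exact (Conf.done.inj h).symm
  · exact absurd hs done_stuck

/-- Backward steps can land on a nonnegative offset, but only one below `nbdays ≤ 31`,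
so negative offsets are charged an extra `31`. -/
def dayBudget (n : ℤ) : ℕ := if 0 ≤ n then n.toNat else (31 - n).toNat

lemma Step.progress {D : Date} (hD : D.valid) (n : ℤ) :
    (∃ D', D'.valid ∧ Step (Conf.pending D n) (Conf.done D')) ∨
      ∃ E n', E.valid ∧ dayBudget n' < dayBudget n ∧
        Step (Conf.pending D n) (Conf.pending E n') := by
  obtain ⟨y, m, d⟩ := D
  have hv : 1 ≤ m ∧ m ≤ 12 ∧ 1 ≤ d ∧ d ≤ nbdays y m := hD
  obtain ⟨hm₁, hm₂, hd₁, hd₂⟩ := hv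
  have hnb := twentyEight_le_nbdays y m
  by_cases hlo : 1 ≤ d + n
  · by_cases hhi : d + n ≤ nbdays y m
    · exact .inl ⟨_, ⟨hm₁, hm₂, hlo, hhi⟩, .add_days hlo hhi⟩
    · refine .inr ⟨_, _, addMonths_valid le_rfl 1, ?_, .add_days_over (not_le.mp hhi)⟩
      unfold dayBudget; split_ifs <;> omega
  by_cases hd : 1 < d
  · refine .inr ⟨_, _, Date.valid_first_of_month hD, ?_, .add_days_under1 hd (n := n) ?_⟩
    · unfold dayBudget; split_ifs <;> omega
    · omega
  obtain rfl : d = 1 := by omega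
  have hprev := addMonths_valid (D := ⟨y, m, 1⟩) le_rfl (-1)
  rw [addMonths_first_of_month] at hprev
  refine .inr ⟨_, _, hprev, ?_, .add_days_under2 (by omega) (addMonths_first_of_month y m (-1))⟩
  have := twentyEight_le_nbdays (y + (m - 1 + -1) / 12) (1 + (m - 1 + -1) % 12)
  have := nbdays_le_thirtyOne (y + (m - 1 + -1) / 12) (1 + (m - 1 + -1) % 12)
  unfold dayBudget; split_ifs <;> omega

lemma exists_reduces_done {D : Date} (hD : D.valid) (n : ℤ) :
    ∃ D', D'.valid ∧ Reduces (Conf.pending D n) (Conf.done D') := by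
  induction hb : dayBudget n using Nat.strong_induction_on generalizing D n with
  | _ b ih =>
    rcases Step.progress hD n with ⟨D', hD', hs⟩ | ⟨E, n', hE, hlt, hs⟩
    · exact ⟨D', hD', .single hs⟩
    · obtain ⟨D', hD', hr⟩ := ih _ (hb ▸ hlt) hE n' rfl
      exact ⟨D', hD', .head hs hr⟩

/-- **Normalization and well-formedness of date-period addition**: for every valid date
`D` and every period `(ny, nm, nd) ∈ ℤ³`, the small-step rules terminate when started
from `D +P (ny, nm, nd) = (D +m (12·ny + nm)) +D nd`: there is a unique valid date `D'`
to which the starting configuration reduces in finitely many steps. -/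
theorem datePeriod_normalization (D : Date) (hD : D.valid) (ny nm nd : ℤ) :
    ∃! D' : Date, D'.valid ∧
      Reduces (Conf.pending (addMonths D (12 * ny + nm)) nd) (Conf.done D') := by
  obtain ⟨D', hD', hr⟩ := exists_reduces_done (addMonths_valid hD.2.2.1 (12 * ny + nm)) nd
  exact ⟨D', ⟨hD', hr⟩, fun E hE => hE.2.done_unique hr⟩
end

section
/- Correctness of epoch-based date comparison: for any two valid dates D1 and D2, D1 ≤ D2 (in the lexicographic order on dates) if and only if toΔ(D1) ≤ toΔ(D2) as integers. -/
/-!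
Number the days consecutively: the valid date `(y, m, d)` gets the day number
`daysToMonth (12 y + m - 3) + d`, where `daysToMonth c` counts the days before the `c`-th month
after March of year 0. Consecutive months start `nbdays y m` days apart, so the day number is
strictly increasing for the lexicographic order. Each rule of the day-addition machine preserves
`dayNumber D + n`, and the machine halts on valid dates, so `dayNumber (D +D n) = dayNumber D + n`.
Hence `toΔ D = dayNumber D - dayNumber epoch`, and comparing `toΔ` compares dates.
-/

def daysToYear (q : ℤ) : ℤ := 365 * q + q / 4 - q / 100 + q / 400

/-- Counting months from March puts the leap day at the end of the year; `(153 r + 2) / 5` is the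
number of days in the first `r` months of the cycle 31, 30, 31, 30, 31, 31, 30, 31, 30, 31, 31. -/
def daysToMonth (c : ℤ) : ℤ := daysToYear (c / 12) + (153 * (c % 12) + 2) / 5

lemma nbdays_bounds (y m : ℤ) : 28 ≤ nbdays y m ∧ nbdays y m ≤ 31 := by
  unfold nbdays; split_ifs <;> omega

lemma daysToYear_succ (q : ℤ) :
    daysToYear (q + 1) = daysToYear q + nbdays (q + 1) 2 + 337 := by
  simp only [daysToYear, nbdays]
  split_ifs <;> omega

lemma daysToMonth_succ (c : ℤ) :
    daysToMonth (c + 1) = daysToMonth c + nbdays ((c + 2) / 12) ((c + 2) % 12 + 1) := by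
  rcases (show c % 12 = 11 ∨ c % 12 < 11 by omega) with h | h
  · have hq : (c + 1) / 12 = c / 12 + 1 := by omega
    have hy : (c + 2) / 12 = c / 12 + 1 := by omega
    have hm : (c + 2) % 12 + 1 = 2 := by omega
    rw [daysToMonth, daysToMonth, hq, hy, hm, daysToYear_succ, h]
    omega
  · have hq : (c + 1) / 12 = c / 12 := by omega
    have hr : (c + 1) % 12 = c % 12 + 1 := by omega
    have hm : (c + 2) % 12 + 1 = if c % 12 = 10 then 1 else c % 12 + 3 := by
      split_ifs <;> omega
    have h0 : 0 ≤ c % 12 := Int.emod_nonneg c (by norm_num)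
    rw [daysToMonth, daysToMonth, hq, hr, hm]
    generalize c % 12 = r at h h0 ⊢
    interval_cases r <;> simp [nbdays] <;> omega

lemma daysToMonth_strictMono : StrictMono daysToMonth :=
  strictMono_int_of_lt_succ fun c => by
    have := nbdays_bounds ((c + 2) / 12) ((c + 2) % 12 + 1)
    rw [daysToMonth_succ]
    omega

namespace Date

def monthIndex (D : Date) : ℤ := 12 * D.y + D.m - 3

def dayNumber (D : Date) : ℤ := daysToMonth D.monthIndex + D.d

lemma daysToMonth_monthIndex_succ {D : Date} (hm₁ : 1 ≤ D.m) (hm₁₂ : D.m ≤ 12) :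
    daysToMonth (D.monthIndex + 1) = daysToMonth D.monthIndex + nbdays D.y D.m := by
  have hy : (D.monthIndex + 2) / 12 = D.y := by unfold monthIndex; omega
  have hm : (D.monthIndex + 2) % 12 + 1 = D.m := by unfold monthIndex; omega
  rw [daysToMonth_succ, hy, hm]

lemma monthIndex_addMonths (D : Date) (k : ℤ) :
    (addMonths D k).monthIndex = D.monthIndex + k := by
  simp only [addMonths, monthIndex]
  omega

lemma addMonths_first (y m k : ℤ) :
    addMonths ⟨y, m, 1⟩ k = ⟨y + (m - 1 + k) / 12, 1 + (m - 1 + k) % 12, 1⟩ := by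
  have := nbdays_bounds (y + (m - 1 + k) / 12) (1 + (m - 1 + k) % 12)
  simp only [addMonths, Date.mk.injEq, true_and]
  omega

lemma valid_addMonths {D : Date} (hd : 1 ≤ D.d) (k : ℤ) : (addMonths D k).valid := by
  have := nbdays_bounds (D.y + (D.m - 1 + k) / 12) (1 + (D.m - 1 + k) % 12)
  simp only [valid, addMonths]
  omega

lemma dayNumber_lt_of_lt {D₁ D₂ : Date} (h₁ : D₁.valid) (h₂ : D₂.valid) (h : D₁.lt D₂) :
    D₁.dayNumber < D₂.dayNumber := by
  obtain ⟨hm₁, hm₁₂, -, hd₁⟩ := h₁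
  obtain ⟨hm₂, hm₂', hd₂, -⟩ := h₂
  unfold dayNumber
  rcases (show D₁.monthIndex ≤ D₂.monthIndex by unfold lt monthIndex at *; omega).lt_or_eq
    with hlt | heq
  · have hmono := daysToMonth_strictMono.monotone (Int.add_one_le_of_lt hlt)
    have := daysToMonth_monthIndex_succ hm₁ hm₁₂
    omega
  · unfold lt monthIndex at *
    rw [heq]
    omega

lemma le_iff_dayNumber_le {D₁ D₂ : Date} (h₁ : D₁.valid) (h₂ : D₂.valid) :
    D₁.le D₂ ↔ D₁.dayNumber ≤ D₂.dayNumber := by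
  constructor
  · intro h
    by_cases heq : D₁ = D₂
    · rw [heq]
    · refine (dayNumber_lt_of_lt h₁ h₂ ?_).le
      obtain ⟨y₁, m₁, d₁⟩ := D₁
      obtain ⟨y₂, m₂, d₂⟩ := D₂
      simp only [le, lt, Date.mk.injEq] at h heq ⊢
      omega
  · intro h
    by_contra hn
    have := dayNumber_lt_of_lt h₂ h₁ (by unfold le lt at *; omega)
    omega

lemma eq_of_dayNumber_eq {D₁ D₂ : Date} (h₁ : D₁.valid) (h₂ : D₂.valid)
    (h : D₁.dayNumber = D₂.dayNumber) : D₁ = D₂ := by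
  have h₁₂ := (le_iff_dayNumber_le h₁ h₂).2 h.le
  have h₂₁ := (le_iff_dayNumber_le h₂ h₁).2 h.ge
  obtain ⟨y₁, m₁, d₁⟩ := D₁
  obtain ⟨y₂, m₂, d₂⟩ := D₂
  simp only [le, Date.mk.injEq] at h₁₂ h₂₁ ⊢
  omega

end Date

namespace Conf

def date : Conf → Date
  | pending D _ => D
  | done D => D

def target : Conf → ℤ
  | pending D n => D.dayNumber + n
  | done D => D.dayNumber

/-- Only `add_days_under2` can raise the offset: from `n < 0` it either stays negative and
closer to 0, or becomes at most 30, below the 32 charged to any negative offset. -/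
def measure : Conf → ℕ
  | pending _ n => if n < 0 then (32 - n).toNat else (n + 1).toNat
  | done _ => 0

end Conf

lemma Step.valid_and_target_eq {c c' : Conf} (hs : Step c c') (hc : c.date.valid) :
    c'.date.valid ∧ c'.target = c.target := by
  obtain ⟨hm₁, hm₁₂, -, -⟩ := hc
  cases hs with
  | add_days h₁ h₂ =>
    refine ⟨⟨hm₁, hm₁₂, h₁, h₂⟩, ?_⟩
    simp only [Conf.target, Date.dayNumber, Date.monthIndex]
    ring
  | @add_days_over y m =>
    refine ⟨Date.valid_addMonths le_rfl 1, ?_⟩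
    have hidx := Date.monthIndex_addMonths ⟨y, m, 1⟩ 1
    have hsucc := Date.daysToMonth_monthIndex_succ (D := ⟨y, m, 1⟩) hm₁ hm₁₂
    simp only [Conf.target, Date.dayNumber]
    rw [hidx, hsucc, Date.addMonths_first]
    simp only [Date.monthIndex]
    ring
  | @add_days_under1 y m =>
    refine ⟨⟨hm₁, hm₁₂, le_rfl, le_trans (show (1 : ℤ) ≤ 28 by norm_num) (nbdays_bounds y m).1⟩, ?_⟩
    simp only [Conf.target, Date.dayNumber, Date.monthIndex]
    ring
  | @add_days_under2 y m _ y' m' _ h₂ =>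
    have hv : (Date.mk y' m' 1).valid := h₂ ▸ Date.valid_addMonths le_rfl (-1)
    refine ⟨hv, ?_⟩
    have hidx := Date.monthIndex_addMonths ⟨y, m, 1⟩ (-1)
    have hsucc := Date.daysToMonth_monthIndex_succ hv.1 hv.2.1
    rw [h₂] at hidx
    simp only [Conf.target, Date.dayNumber]
    rw [show (Date.mk y m 1).monthIndex = (Date.mk y' m' 1).monthIndex + 1 by omega, hsucc]
    ring

lemma Step.measure_lt {c c' : Conf} (hs : Step c c') (hc : c.date.valid) :
    c'.measure < c.measure := by
  cases hs with
  | add_days => simp only [Conf.measure]; split_ifs <;> omega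
  | add_days_over =>
    have hd := hc.2.2.2
    simp only [Conf.date, Conf.measure] at hd ⊢
    split_ifs <;> omega
  | add_days_under1 => simp only [Conf.measure]; split_ifs <;> omega
  | @add_days_under2 _ _ _ y' m' =>
    have := nbdays_bounds y' m'
    simp only [Conf.measure]
    split_ifs <;> omega

lemma Step.exists_of_valid {D : Date} (hD : D.valid) (n : ℤ) : ∃ c, Step (.pending D n) c := by
  obtain ⟨y, m, d⟩ := D
  have hd : 1 ≤ d := hD.2.2.1
  by_cases hover : d + n > nbdays y m
  · exact ⟨_, .add_days_over hover⟩
  by_cases hin : 1 ≤ d + n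
  · exact ⟨_, .add_days hin (by omega)⟩
  by_cases hfirst : 1 < d
  · exact ⟨_, .add_days_under1 hfirst (by omega)⟩
  obtain rfl : d = 1 := by omega
  exact ⟨_, .add_days_under2 (by omega) (Date.addMonths_first y m (-1))⟩

theorem exists_reduces_done_s10 : ∀ c : Conf, c.date.valid → ∃ E, Reduces c (.done E)
  | .done E, _ => ⟨E, .refl⟩
  | .pending D n, hc =>
    have ⟨c', hs⟩ := Step.exists_of_valid hc n
    have ⟨E, hE⟩ := exists_reduces_done_s10 c' (hs.valid_and_target_eq hc).1
    ⟨E, .head hs hE⟩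
termination_by c => c.measure
decreasing_by exact hs.measure_lt hc

lemma Reduces.valid_and_target_eq {c c' : Conf} (h : Reduces c c') (hc : c.date.valid) :
    c'.date.valid ∧ c'.target = c.target := by
  induction h with
  | refl => exact ⟨hc, rfl⟩
  | tail _ hs ih =>
    obtain ⟨hv, ht⟩ := ih
    exact ⟨(hs.valid_and_target_eq hv).1, (hs.valid_and_target_eq hv).2.trans ht⟩

lemma valid_addDays_and_dayNumber_addDays {D : Date} (hD : D.valid) (n : ℤ) :
    (addDays D n).valid ∧ (addDays D n).dayNumber = D.dayNumber + n := by
  obtain ⟨E, hE⟩ := exists_reduces_done_s10 (.pending D n) hD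
  have ⟨hv, hred⟩ := Classical.epsilon_spec
    (p := fun E ↦ E.valid ∧ Reduces (.pending D n) (.done E))
    ⟨E, (hE.valid_and_target_eq hD).1, hE⟩
  exact ⟨hv, (hred.valid_and_target_eq hD).2⟩

lemma epoch_valid : epoch.valid := by
  norm_num [epoch, Date.valid, nbdays]

lemma toDelta_eq {D : Date} (hD : D.valid) : toDelta D = D.dayNumber - epoch.dayNumber := by
  have hex : ∃ n, addDays epoch n = D := by
    obtain ⟨hv, hnum⟩ :=
      valid_addDays_and_dayNumber_addDays epoch_valid (D.dayNumber - epoch.dayNumber)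
    exact ⟨_, Date.eq_of_dayNumber_eq hv hD (by rw [hnum]; ring)⟩
  have hD' : addDays epoch (toDelta D) = D := Classical.epsilon_spec hex
  have := (valid_addDays_and_dayNumber_addDays epoch_valid (toDelta D)).2
  rw [hD'] at this
  omega

/-- **Correctness of epoch-based date comparison**: for valid dates `D1`, `D2`,
`D1 ≤ D2` in the lexicographic order iff `toΔ(D1) ≤ toΔ(D2)` as integers. -/
theorem toDelta_le_iff (D1 D2 : Date) (h1 : D1.valid) (h2 : D2.valid) :
    Date.le D1 D2 ↔ toDelta D1 ≤ toDelta D2 := by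
  rw [Date.le_iff_dayNumber_le h1 h2, toDelta_eq h1, toDelta_eq h2, sub_le_sub_iff_right]
end
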